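/- arXiv:2510.22686 — 4 statements merged into one kernel-verified Lean document; each statement's English description precedes it below -/
import Mathlib

section
/- The distributional Bellman expectation operator T^π is a γ-contraction in the supremum p-Wasserstein metric: for any two conditional return-distribution functions p_θ, p_θ', we have W̄_p(T^π p_θ, T^π p_θ') ≤ γ · W̄_p(p_θ, p_θ'), where 0 ≤ γ < 1 is the discount factor. -/
open MeasureTheory ENNReal

/-- The p-Wasserstein distance between two measures on the reals. -/
noncomputable def Wp (p : ℝ) (μ ν : MeasureTheory.Measure ℝ) : ℝ≥0∞ :=
  (⨅ π ∈ {π : MeasureTheory.Measure (ℝ × ℝ) |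
      π.map Prod.fst = μ ∧ π.map Prod.snd = ν},
    ∫⁻ q, (edist q.1 q.2) ^ p ∂π) ^ (1 / p)

/-- The supremum p-Wasserstein metric over the states. -/
noncomputable def WpBar (S : Type*) (p : ℝ) (P Q : S → MeasureTheory.Measure ℝ) : ℝ≥0∞ :=
  ⨆ s : S, Wp p (P s) (Q s)

/-- The distributional Bellman expectation operator: `(bellman pol Pk r γ Z) s` is the
law of `r s a + γ * z` where `a ∼ pol s`, `s' ∼ Pk s a`, and `z ∼ Z s'`. -/
noncomputable def bellman {S A : Type*} [Fintype S] [Fintype A]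
    (pol : S → A → ℝ≥0∞) (Pk : S → A → S → ℝ≥0∞) (r : S → A → ℝ) (γ : ℝ)
    (Z : S → MeasureTheory.Measure ℝ) : S → MeasureTheory.Measure ℝ :=
  fun s => ∑ a : A, ∑ s' : S,
    (pol s a * Pk s a s') • ((Z s').map (fun z => r s a + γ * z))

/-! Couple the Bellman images by mixing couplings of `Zθ s'` and `Zθ' s'` with the weights
`pol s a * Pk s a s'`, after pushing both coordinates through `z ↦ r s a + γ * z`. The
transport cost is linear in the coupling, so a mixture of near-optimal couplings costs at most
the supremum of the costs, and the affine map multiplies distances by `γ`, hence costs by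
`γ ^ p`. Taking `p`-th roots turns `γ ^ p` into `γ`. -/

open scoped NNReal

noncomputable section

namespace Wasserstein

variable {X : Type*} [MeasurableSpace X]

def couplings (μ ν : Measure X) : Set (Measure (X × X)) :=
  {π | π.map Prod.fst = μ ∧ π.map Prod.snd = ν}

theorem prod_mem_couplings (μ ν : Measure X) [IsProbabilityMeasure μ] [IsProbabilityMeasure ν] :
    μ.prod ν ∈ couplings μ ν := by
  simp [couplings, Measure.map_fst_prod, Measure.map_snd_prod]

theorem map_prodMap_mem_couplings {Y : Type*} [MeasurableSpace Y] {μ ν : Measure X}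
    {π : Measure (X × X)} {f : X → Y}
    (hf : Measurable f) (hπ : π ∈ couplings μ ν) :
    π.map (Prod.map f f) ∈ couplings (μ.map f) (ν.map f) := by
  obtain ⟨hπ₁, hπ₂⟩ := hπ
  refine ⟨?_, ?_⟩
  · rw [Measure.map_map measurable_fst (hf.prodMap hf), ← hπ₁,
      Measure.map_map hf measurable_fst]
    rfl
  · rw [Measure.map_map measurable_snd (hf.prodMap hf), ← hπ₂,
      Measure.map_map hf measurable_snd]
    rfl

theorem sum_smul_mem_couplings {ι : Type*} [Fintype ι] (w : ι → ℝ≥0∞)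
    {μ ν : ι → Measure X} {π : ι → Measure (X × X)} (hπ : ∀ i, π i ∈ couplings (μ i) (ν i)) :
    ∑ i, w i • π i ∈ couplings (∑ i, w i • μ i) (∑ i, w i • ν i) := by
  refine ⟨?_, ?_⟩
  · simp only [Measure.map_finset_sum' measurable_fst.aemeasurable, Measure.map_smul,
      fun i => (hπ i).1]
  · simp only [Measure.map_finset_sum' measurable_snd.aemeasurable, Measure.map_smul,
      fun i => (hπ i).2]

variable [PseudoEMetricSpace X]

def couplingCost (p : ℝ) (π : Measure (X × X)) : ℝ≥0∞ :=
  ∫⁻ q, edist q.1 q.2 ^ p ∂π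

def transportCost (p : ℝ) (μ ν : Measure X) : ℝ≥0∞ :=
  ⨅ π ∈ couplings μ ν, couplingCost p π

theorem couplingCost_sum_smul {ι : Type*} [Fintype ι] (p : ℝ) (w : ι → ℝ≥0∞)
    (π : ι → Measure (X × X)) :
    couplingCost p (∑ i, w i • π i) = ∑ i, w i * couplingCost p (π i) := by
  simp only [couplingCost, lintegral_finsetSum_measure, lintegral_smul_measure, smul_eq_mul]

theorem couplingCost_map_prodMap_le {Y : Type*} [PseudoEMetricSpace Y] [MeasurableSpace Y]
    {f : X → Y} {K : ℝ≥0} (hf : LipschitzWith K f)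
    {p : ℝ} (hp : 0 ≤ p) (π : Measure (X × X)) :
    couplingCost p (π.map (Prod.map f f)) ≤ (K : ℝ≥0∞) ^ p * couplingCost p π := by
  calc couplingCost p (π.map (Prod.map f f))
      ≤ ∫⁻ q, edist (f q.1) (f q.2) ^ p ∂π := lintegral_map_le _ _
    _ ≤ ∫⁻ q, (K : ℝ≥0∞) ^ p * edist q.1 q.2 ^ p ∂π := by
        refine lintegral_mono fun q => ?_
        rw [← ENNReal.mul_rpow_of_nonneg _ _ hp]
        exact ENNReal.rpow_le_rpow (hf q.1 q.2) hp
    _ = (K : ℝ≥0∞) ^ p * couplingCost p π :=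
        lintegral_const_mul' _ _ (ENNReal.rpow_ne_top_of_nonneg hp ENNReal.coe_ne_top)

theorem transportCost_map_le [OpensMeasurableSpace X] {Y : Type*} [PseudoEMetricSpace Y]
    [MeasurableSpace Y] [BorelSpace Y] {f : X → Y} {K : ℝ≥0} (hf : LipschitzWith K f)
    {p : ℝ} (hp : 0 ≤ p) {μ ν : Measure X} (hμν : (couplings μ ν).Nonempty) :
    transportCost p (μ.map f) (ν.map f) ≤ (K : ℝ≥0∞) ^ p * transportCost p μ ν := by
  have : Nonempty (couplings μ ν) := hμν.to_subtype
  conv_rhs => rw [transportCost, iInf_subtype', ENNReal.mul_iInf fun h =>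
    absurd h (ENNReal.rpow_ne_top_of_nonneg hp ENNReal.coe_ne_top)]
  refine le_iInf fun π => ?_
  calc transportCost p (μ.map f) (ν.map f)
      ≤ couplingCost p (π.1.map (Prod.map f f)) :=
        iInf₂_le _ (map_prodMap_mem_couplings hf.continuous.measurable π.2)
    _ ≤ (K : ℝ≥0∞) ^ p * couplingCost p π.1 := couplingCost_map_prodMap_le hf hp _

theorem transportCost_sum_smul_le_iSup {ι : Type*} [Fintype ι] (p : ℝ) {w : ι → ℝ≥0∞}
    (hw : ∑ i, w i ≤ 1) (μ ν : ι → Measure X) :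
    transportCost p (∑ i, w i • μ i) (∑ i, w i • ν i) ≤ ⨆ i, transportCost p (μ i) (ν i) := by
  refine le_of_forall_gt_imp_ge_of_dense fun b hb => ?_
  have hπ : ∀ i, ∃ π ∈ couplings (μ i) (ν i), couplingCost p π < b := fun i => by
    simpa only [transportCost, iInf_lt_iff, exists_prop] using (le_iSup _ i).trans_lt hb
  choose π hπ hπb using hπ
  calc transportCost p (∑ i, w i • μ i) (∑ i, w i • ν i)
      ≤ couplingCost p (∑ i, w i • π i) := iInf₂_le _ (sum_smul_mem_couplings w hπ)
    _ = ∑ i, w i * couplingCost p (π i) := couplingCost_sum_smul p w π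
    _ ≤ ∑ i, w i * b := by gcongr with i; exact (hπb i).le
    _ = (∑ i, w i) * b := (Finset.sum_mul ..).symm
    _ ≤ b := mul_le_of_le_one_left' hw

end Wasserstein

end

open Wasserstein

theorem WpBar_eq_iSup_transportCost_rpow (S : Type*) {p : ℝ} (hp : 0 < p)
    (P Q : S → Measure ℝ) :
    WpBar S p P Q = (⨆ s, transportCost p (P s) (Q s)) ^ (1 / p) :=
  ((ENNReal.orderIsoRpow (1 / p) (one_div_pos.2 hp)).map_iSup _).symm

theorem lipschitzWith_const_add_mul (c : ℝ) {γ : ℝ} (hγ : 0 ≤ γ) :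
    LipschitzWith (Real.toNNReal γ) fun z : ℝ => c + γ * z :=
  LipschitzWith.of_dist_le_mul fun x y => by
    simp [Real.dist_eq, ← mul_sub, abs_mul, abs_of_nonneg hγ, Real.coe_toNNReal _ hγ]

theorem bellman_eq_sum_smul_sum_smul {S A : Type*} [Fintype S] [Fintype A]
    (pol : S → A → ℝ≥0∞) (Pk : S → A → S → ℝ≥0∞) (r : S → A → ℝ) (γ : ℝ)
    (Z : S → Measure ℝ) (s : S) :
    bellman pol Pk r γ Z s =
      ∑ a, pol s a • ∑ s', Pk s a s' • (Z s').map (fun z => r s a + γ * z) := by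
  simp only [bellman, mul_smul, Finset.smul_sum]

theorem transportCost_bellman_le {S A : Type*} [Fintype S] [Fintype A]
    (pol : S → A → ℝ≥0∞) (hpol : ∀ s, ∑ a : A, pol s a = 1)
    (Pk : S → A → S → ℝ≥0∞) (hPk : ∀ s a, ∑ s' : S, Pk s a s' = 1)
    (r : S → A → ℝ) {γ : ℝ} (hγ : 0 ≤ γ) {p : ℝ} (hp : 0 ≤ p) (Z Z' : S → Measure ℝ)
    (hZ : ∀ s, IsProbabilityMeasure (Z s)) (hZ' : ∀ s, IsProbabilityMeasure (Z' s)) (s : S) :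
    transportCost p (bellman pol Pk r γ Z s) (bellman pol Pk r γ Z' s) ≤
      ENNReal.ofReal γ ^ p * ⨆ s', transportCost p (Z s') (Z' s') := by
  simp only [bellman_eq_sum_smul_sum_smul]
  calc _ ≤ ⨆ a, transportCost p (∑ s', Pk s a s' • (Z s').map (fun z => r s a + γ * z))
              (∑ s', Pk s a s' • (Z' s').map (fun z => r s a + γ * z)) :=
        transportCost_sum_smul_le_iSup p (hpol s).le _ _
    _ ≤ ⨆ a, ⨆ s', transportCost p ((Z s').map (fun z => r s a + γ * z))
              ((Z' s').map (fun z => r s a + γ * z)) :=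
        iSup_mono fun a => transportCost_sum_smul_le_iSup p (hPk s a).le _ _
    _ ≤ ⨆ (_ : A), ⨆ s', ENNReal.ofReal γ ^ p * transportCost p (Z s') (Z' s') := by
        gcongr with a s'
        exact transportCost_map_le (lipschitzWith_const_add_mul _ hγ) hp
          ⟨_, prod_mem_couplings _ _⟩
    _ ≤ ENNReal.ofReal γ ^ p * ⨆ s', transportCost p (Z s') (Z' s') :=
        iSup_le fun _ => (ENNReal.mul_iSup ..).ge

theorem bellman_contraction_general {S A : Type*} [Fintype S] [Fintype A]
    (pol : S → A → ℝ≥0∞) (hpol : ∀ s, ∑ a : A, pol s a = 1)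
    (Pk : S → A → S → ℝ≥0∞) (hPk : ∀ s a, ∑ s' : S, Pk s a s' = 1)
    (r : S → A → ℝ) (γ : ℝ) (hγ0 : 0 ≤ γ)
    (p : ℝ) (hp : 1 ≤ p)
    (Zθ Zθ' : S → MeasureTheory.Measure ℝ)
    (hZθ : ∀ s, IsProbabilityMeasure (Zθ s)) (hZθ' : ∀ s, IsProbabilityMeasure (Zθ' s)) :
    WpBar S p (bellman pol Pk r γ Zθ) (bellman pol Pk r γ Zθ')
      ≤ ENNReal.ofReal γ * WpBar S p Zθ Zθ' := by
  have hp0 : 0 < p := zero_lt_one.trans_le hp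
  have hbellman := transportCost_bellman_le pol hpol Pk hPk r hγ0 hp0.le Zθ Zθ' hZθ hZθ'
  rw [WpBar_eq_iSup_transportCost_rpow S hp0, WpBar_eq_iSup_transportCost_rpow S hp0]
  calc (⨆ s, transportCost p (bellman pol Pk r γ Zθ s) (bellman pol Pk r γ Zθ' s)) ^ (1 / p)
      ≤ (ENNReal.ofReal γ ^ p * ⨆ s, transportCost p (Zθ s) (Zθ' s)) ^ (1 / p) :=
        ENNReal.rpow_le_rpow (iSup_le hbellman) (one_div_nonneg.2 hp0.le)
    _ = ENNReal.ofReal γ * (⨆ s, transportCost p (Zθ s) (Zθ' s)) ^ (1 / p) := by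
        rw [ENNReal.mul_rpow_of_nonneg _ _ (one_div_nonneg.2 hp0.le), ← ENNReal.rpow_mul,
          mul_one_div_cancel hp0.ne', ENNReal.rpow_one]

/-- The distributional Bellman operator is a γ-contraction in the supremum
p-Wasserstein metric. -/
theorem bellman_contraction {S A : Type*} [Fintype S] [Fintype A]
    [Nonempty S] [Nonempty A]
    (pol : S → A → ℝ≥0∞) (hpol : ∀ s, ∑ a : A, pol s a = 1)
    (Pk : S → A → S → ℝ≥0∞) (hPk : ∀ s a, ∑ s' : S, Pk s a s' = 1)
    (r : S → A → ℝ) (γ : ℝ) (hγ0 : 0 ≤ γ) (hγ1 : γ < 1)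
    (p : ℝ) (hp : 1 ≤ p)
    (Zθ Zθ' : S → MeasureTheory.Measure ℝ)
    (hZθ : ∀ s, IsProbabilityMeasure (Zθ s)) (hZθ' : ∀ s, IsProbabilityMeasure (Zθ' s))
    (hZθm : ∀ s, ∫⁻ x, (‖x‖₊ : ℝ≥0∞) ^ p ∂(Zθ s) < ∞)
    (hZθ'm : ∀ s, ∫⁻ x, (‖x‖₊ : ℝ≥0∞) ^ p ∂(Zθ' s) < ∞) :
    WpBar S p (bellman pol Pk r γ Zθ) (bellman pol Pk r γ Zθ')
      ≤ ENNReal.ofReal γ * WpBar S p Zθ Zθ' :=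
  bellman_contraction_general pol hpol Pk hPk r γ hγ0 p hp Zθ Zθ' hZθ hZθ'
end

section
/- Suppose a contraction mapping T on a complete metric space (M, d) with contraction factor γ ∈ [0,1) has fixed point p*, and a sequence (p_t) satisfies d(p_{t+1}, T p_t) ≤ ε_{t+1} with ε_{t+1} ≤ ε_max for all t. Then limsup_{t→∞} d(p_t, p*) ≤ ε_max/(1−γ). -/
/-!
The error `a t := dist (p t) p*` obeys `a (t + 1) ≤ γ * a t + εmax`, by the triangle inequality
through `T (p t)` and the contraction estimate against `T p* = p*`. Unrolling this affine
recursion gives `a t ≤ γ ^ t * (a 0 - E) + E` with `E = εmax / (1 - γ)` its fixed point, and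
the geometric term vanishes in the limit.
-/

open Filter Topology

lemma le_pow_mul_add_of_le_mul_add {a : ℕ → ℝ} {γ c : ℝ} (hγ0 : 0 ≤ γ) (hγ1 : γ ≠ 1)
    (ha : ∀ t, a (t + 1) ≤ γ * a t + c) (t : ℕ) :
    a t ≤ γ ^ t * (a 0 - c / (1 - γ)) + c / (1 - γ) := by
  induction t with
  | zero => simp
  | succ n ih =>
    have hc : c = (1 - γ) * (c / (1 - γ)) := (mul_div_cancel₀ c (sub_ne_zero.mpr hγ1.symm)).symm
    calc a (n + 1) ≤ γ * a n + c := ha n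
      _ ≤ γ * (γ ^ n * (a 0 - c / (1 - γ)) + c / (1 - γ)) + c := by gcongr
      _ = γ ^ (n + 1) * (a 0 - c / (1 - γ)) + c / (1 - γ) := by linear_combination hc

lemma limsup_le_of_le_mul_add {a : ℕ → ℝ} {γ c : ℝ} (hγ0 : 0 ≤ γ) (hγ1 : γ < 1)
    (ha : ∀ t, a (t + 1) ≤ γ * a t + c) (hbdd : IsBoundedUnder (· ≥ ·) atTop a) :
    limsup a atTop ≤ c / (1 - γ) := by
  set b : ℕ → ℝ := fun t => γ ^ t * (a 0 - c / (1 - γ)) + c / (1 - γ)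
  have hb : Tendsto b atTop (𝓝 (c / (1 - γ))) := by
    simpa [b] using ((tendsto_pow_atTop_nhds_zero_of_lt_one hγ0 hγ1).mul_const
      (a 0 - c / (1 - γ))).add_const (c / (1 - γ))
  calc limsup a atTop ≤ limsup b atTop :=
        limsup_le_limsup (.of_forall (le_pow_mul_add_of_le_mul_add hγ0 hγ1.ne ha))
          hbdd.isCoboundedUnder_le hb.isBoundedUnder_le
    _ = c / (1 - γ) := hb.limsup_eq

theorem approximate_contraction_iteration_general {M : Type*} [MetricSpace M]
    (T : M → M) (γ : ℝ) (hγ0 : 0 ≤ γ) (hγ1 : γ < 1)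
    (hT : ∀ x y : M, dist (T x) (T y) ≤ γ * dist x y)
    (pstar : M) (hfix : T pstar = pstar)
    (p : ℕ → M) (ε : ℕ → ℝ) (εmax : ℝ)
    (hstep : ∀ t : ℕ, dist (p (t + 1)) (T (p t)) ≤ ε (t + 1))
    (hbound : ∀ t : ℕ, ε (t + 1) ≤ εmax) :
    Filter.limsup (fun t => dist (p t) pstar) Filter.atTop ≤ εmax / (1 - γ) := by
  refine limsup_le_of_le_mul_add hγ0 hγ1 (fun t => ?_)
    (isBoundedUnder_of_eventually_ge (.of_forall fun _ => dist_nonneg))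
  calc dist (p (t + 1)) pstar ≤ dist (p (t + 1)) (T (p t)) + dist (T (p t)) (T pstar) := by
        rw [hfix]; exact dist_triangle _ _ _
    _ ≤ γ * dist (p t) pstar + εmax := by linarith [hstep t, hbound t, hT (p t) pstar]

/-- Approximate fixed-point iteration for a γ-contraction on a complete metric space:
if each step incurs at most `εmax` error, the iterates converge to a neighborhood of
the fixed point of radius `εmax / (1 - γ)`. -/
theorem approximate_contraction_iteration {M : Type*} [MetricSpace M] [CompleteSpace M]
    (T : M → M) (γ : ℝ) (hγ0 : 0 ≤ γ) (hγ1 : γ < 1)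
    (hT : ∀ x y : M, dist (T x) (T y) ≤ γ * dist x y)
    (pstar : M) (hfix : T pstar = pstar)
    (p : ℕ → M) (ε : ℕ → ℝ) (εmax : ℝ)
    (hstep : ∀ t : ℕ, dist (p (t + 1)) (T (p t)) ≤ ε (t + 1))
    (hbound : ∀ t : ℕ, ε (t + 1) ≤ εmax) :
    Filter.limsup (fun t => dist (p t) pstar) Filter.atTop ≤ εmax / (1 - γ) :=
  approximate_contraction_iteration_general T γ hγ0 hγ1 hT pstar hfix p ε εmax hstep hbound
end

section
/- Let κ_1, …, κ_N be nonnegative reals, not all equal, and define φ(α) = (Σ_i e^{−2ακ_i} κ_i²)/(Σ_j e^{−ακ_j})² − (1/N²) Σ_i κ_i². Then φ(0) = 0 and φ'(0) = (2/N³)·((Σ_i κ_i²)(Σ_j κ_j) − N Σ_i κ_i³) < 0. -/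
/-!
At `α = 0` all weights equal `1`, so `φ 0 = 0`, and the quotient rule expresses `φ' 0` through
`N` and the power sums of `κ`. Its sign is that of
`(∑ κᵢ²)(∑ κⱼ) - N ∑ κᵢ³ = -½ ∑ᵢⱼ (κᵢ - κⱼ)² (κᵢ + κⱼ)`,
which is negative for nonnegative, non-constant `κ`: a strict Chebyshev sum inequality.
-/

open Finset Real

theorem Finset.sum_sum_sub_mul_sub {ι R : Type*} [CommRing R] (s : Finset ι) (f g : ι → R) :
    ∑ i ∈ s, ∑ j ∈ s, (f i - f j) * (g i - g j) =
      2 * (#s * ∑ i ∈ s, f i * g i - (∑ i ∈ s, f i) * ∑ i ∈ s, g i) := by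
  simp only [sub_mul, mul_sub, sum_sub_distrib, sum_const, nsmul_eq_mul, ← mul_sum, ← sum_mul]
  ring

section OrderedRing

variable {ι R : Type*} [CommRing R] [LinearOrder R] [IsStrictOrderedRing R]

theorem Finset.sum_mul_sum_lt_card_mul_sum {s : Finset ι} {f g : ι → R}
    (h : ∀ i ∈ s, ∀ j ∈ s, 0 ≤ (f i - f j) * (g i - g j))
    (hlt : ∃ i ∈ s, ∃ j ∈ s, 0 < (f i - f j) * (g i - g j)) :
    (∑ i ∈ s, f i) * ∑ i ∈ s, g i < #s * ∑ i ∈ s, f i * g i := by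
  obtain ⟨i, hi, j, hj, hij⟩ := hlt
  have hpos : 0 < ∑ i ∈ s, ∑ j ∈ s, (f i - f j) * (g i - g j) :=
    sum_pos' (fun i hi => sum_nonneg (h i hi)) ⟨i, hi, sum_pos' (h i hi) ⟨j, hj, hij⟩⟩
  rw [sum_sum_sub_mul_sub] at hpos
  linarith

theorem sum_sq_mul_sum_lt_card_mul_sum_pow_three [Fintype ι] {κ : ι → R} (hκ : ∀ i, 0 ≤ κ i)
    (hne : ∃ i j, κ i ≠ κ j) :
    (∑ i, κ i ^ 2) * ∑ i, κ i < Fintype.card ι * ∑ i, κ i ^ 3 := by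
  have factor : ∀ i j, (κ i ^ 2 - κ j ^ 2) * (κ i - κ j) = (κ i - κ j) ^ 2 * (κ i + κ j) :=
    fun _ _ => by ring
  obtain ⟨i, j, hij⟩ := hne
  have hsum : 0 < κ i + κ j := by
    by_contra! h
    exact hij (by linarith [hκ i, hκ j])
  have hcheb := sum_mul_sum_lt_card_mul_sum (s := univ) (f := fun i => κ i ^ 2) (g := κ)
    (fun a _ b _ => factor a b ▸ mul_nonneg (sq_nonneg _) (add_nonneg (hκ a) (hκ b)))
    ⟨i, mem_univ _, j, mem_univ _,
      factor i j ▸ mul_pos (sq_pos_of_ne_zero (sub_ne_zero.2 hij)) hsum⟩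
  simpa [← pow_succ] using hcheb

end OrderedRing

theorem hasDerivAt_sum_exp_mul {ι : Type*} (s : Finset ι) (c w : ι → ℝ) (x : ℝ) :
    HasDerivAt (fun α => ∑ i ∈ s, exp (α * c i) * w i) (∑ i ∈ s, exp (x * c i) * c i * w i) x :=
  HasDerivAt.fun_sum fun i _ => ((hasDerivAt_mul_const (c i)).exp).mul_const (w i)

/-- The difference `φ` between the variance of the exponentially-weighted gradient
estimator and the unweighted one vanishes at `α = 0` and has strictly negative
derivative there. -/
theorem weighted_variance_derivative_neg (N : ℕ) (hN : 0 < N) (κ : Fin N → ℝ)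
    (hκ : ∀ i, 0 ≤ κ i) (hne : ∃ i j, κ i ≠ κ j)
    (φ : ℝ → ℝ)
    (hφ : φ = fun α => (∑ i, Real.exp (-2 * α * κ i) * κ i ^ 2) /
        (∑ j, Real.exp (-α * κ j)) ^ 2 - (1 / (N : ℝ) ^ 2) * ∑ i, κ i ^ 2) :
    φ 0 = 0 ∧
    HasDerivAt φ ((2 / (N : ℝ) ^ 3) *
        ((∑ i, κ i ^ 2) * (∑ j, κ j) - (N : ℝ) * ∑ i, κ i ^ 3)) 0 ∧
    (2 / (N : ℝ) ^ 3) * ((∑ i, κ i ^ 2) * (∑ j, κ j) - (N : ℝ) * ∑ i, κ i ^ 3) < 0 := by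
  have hN' : (N : ℝ) ≠ 0 := Nat.cast_ne_zero.2 hN.ne'
  have hφ' : φ = fun α => (∑ i, exp (α * (-2 * κ i)) * κ i ^ 2) /
      (∑ j, exp (α * -κ j) * 1) ^ 2 - (1 / (N : ℝ) ^ 2) * ∑ i, κ i ^ 2 := by
    subst hφ
    ext α
    ring_nf
  have hden := hasDerivAt_sum_exp_mul univ (fun j => -κ j) (fun _ => 1) 0
  have hderiv := ((hasDerivAt_sum_exp_mul univ (fun i => -2 * κ i) (fun i => κ i ^ 2) 0).fun_div
    (hden.fun_pow 2) (by simpa using hN')).sub_const ((1 / (N : ℝ) ^ 2) * ∑ i, κ i ^ 2)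
  refine ⟨?_, ?_, ?_⟩
  · simp [hφ, div_eq_inv_mul]
  · rw [hφ']
    refine hderiv.congr_deriv ?_
    have hcube : ∑ i, -2 * κ i * κ i ^ 2 = -2 * ∑ i, κ i ^ 3 := by
      rw [mul_sum]; exact sum_congr rfl fun i _ => by ring
    simp only [zero_mul, exp_zero, one_mul, mul_one, sum_const, card_univ, Fintype.card_fin,
      nsmul_eq_mul, hcube, sum_neg_distrib]
    field_simp
    ring
  · exact mul_neg_of_pos_of_neg (by positivity)
      (sub_neg.2 (by simpa using sum_sq_mul_sum_lt_card_mul_sum_pow_three hκ hne))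
end

section
/- For a Markov reward process with finite state space, bounded rewards, and discount γ ∈ [0,1), the distributional Bellman operator T^π has a unique fixed point p^π in the space of conditional return distributions with finite p-th moments equipped with the supremum p-Wasserstein metric, and T^π p^π = p^π. -/
open MeasureTheory ENNReal

/-
Work with characteristic functions. Since
`φ_{TZ(s)}(u) = ∑ π(a|s) P(s'|s,a) e^{i u r(s,a)} φ_{Z(s')}(γ u)`, the gap
`D(u) = max_s |φ_{Z(s)}(u) - φ_{Z'(s)}(u)|` satisfies `D_{TZ,TZ'}(u) ≤ D_{Z,Z'}(γ u)`, so
`D_{TⁿZ,TⁿZ'}(u) ≤ D_{Z,Z'}(γⁿ u) → D_{Z,Z'}(0) = 0` by continuity of characteristic functions.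
For two fixed points this is uniqueness. For existence, the iterates `Tⁿ δ₀` stay supported in
`[-R, R]` with `R = ∑ |r| / (1 - γ)`, so by Prokhorov's theorem they have a weak cluster point;
since consecutive iterates have merging characteristic functions, that cluster point is fixed by
`T`, and its bounded support gives all moments.
-/

open Filter Topology Complex
open scoped NNReal

lemma MeasureTheory.ProbabilityMeasure.continuous_charFun_apply {E : Type*}
    [NormedAddCommGroup E] [InnerProductSpace ℝ E] [MeasurableSpace E] [OpensMeasurableSpace E]
    (t : E) : Continuous fun μ : ProbabilityMeasure E => charFun (μ : Measure E) t := by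
  simp_rw [charFun_eq_integral_innerProbChar]
  exact continuous_iff_continuousAt.2 fun μ =>
    (ProbabilityMeasure.tendsto_iff_forall_integral_rclike_tendsto ℂ).1 tendsto_id _

lemma isCompact_setOf_probabilityMeasure_compl_eq_zero {E : Type*} [MeasurableSpace E]
    [TopologicalSpace E] [T2Space E] [BorelSpace E] {K : Set E} (hK : IsCompact K) :
    IsCompact {μ : ProbabilityMeasure E | μ Kᶜ = 0} := by
  simpa using isCompact_setOfPred_probabilityMeasure_mass_eq_compl_isCompact_le
    (u := fun _ => 0) tendsto_const_nhds (fun _ => hK) (.inr monotone_const)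

lemma MapClusterPt.eq_of_tendsto {X α : Type*} [TopologicalSpace X] [T2Space X] {F : Filter α}
    {u : α → X} {x y : X} (hx : MapClusterPt x F u) (hy : Tendsto u F (𝓝 y)) : x = y :=
  eq_of_nhds_neBot (hx.clusterPt.mono hy)

lemma exists_nonneg_forall_abs_add_mul_le {ι : Type*} [Fintype ι] (f : ι → ℝ) {c : ℝ}
    (hc : c < 1) : ∃ R, 0 ≤ R ∧ ∀ i, |f i| + c * R ≤ R := by
  set M := ∑ i, |f i|
  have hM : 0 ≤ M := Finset.sum_nonneg fun _ _ => abs_nonneg _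
  have hc' : 0 < 1 - c := sub_pos.2 hc
  refine ⟨M / (1 - c), div_nonneg hM hc'.le, fun i => ?_⟩
  calc |f i| + c * (M / (1 - c)) ≤ M + c * (M / (1 - c)) := by
        gcongr
        exact Finset.single_le_sum (f := fun i => |f i|) (fun _ _ => abs_nonneg _)
          (Finset.mem_univ i)
    _ = M / (1 - c) := by field_simp; ring

lemma lintegral_nnnorm_rpow_lt_top_of_measure_compl_Icc_eq_zero {μ : Measure ℝ}
    [IsFiniteMeasure μ] {R p : ℝ} (hp : 0 ≤ p) (hμ : μ (Set.Icc (-R) R)ᶜ = 0) :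
    ∫⁻ x, (‖x‖₊ : ℝ≥0∞) ^ p ∂μ < ∞ := by
  have hbound : ∀ᵐ x ∂μ, (‖x‖₊ : ℝ≥0∞) ^ p ≤ ‖R‖₊ ^ p := by
    filter_upwards [measure_eq_zero_iff_ae_notMem.1 hμ] with x hx
    have hx : |x| ≤ |R| := by
      rw [Set.notMem_compl_iff, Set.mem_Icc] at hx
      exact abs_le.2 hx |>.trans (le_abs_self R)
    gcongr
    exact_mod_cast hx
  exact (lintegral_mono_ae hbound).trans_lt (by simp [lintegral_const, ENNReal.mul_lt_top,
    ENNReal.rpow_lt_top_of_nonneg hp])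

section Bellman

variable {S A : Type*} [Fintype S] [Fintype A] {pol : S → A → ℝ≥0∞} {Pk : S → A → S → ℝ≥0∞}
  {r : S → A → ℝ} {γ : ℝ}

lemma sum_pol_mul_Pk (hpol : ∀ s, ∑ a, pol s a = 1) (hPk : ∀ s a, ∑ s', Pk s a s' = 1) (s : S) :
    ∑ a, ∑ s', pol s a * Pk s a s' = 1 := by
  simp [← Finset.mul_sum, hPk, hpol]

lemma pol_mul_Pk_ne_top (hpol : ∀ s, ∑ a, pol s a = 1) (hPk : ∀ s a, ∑ s', Pk s a s' = 1)
    (s : S) (a : A) (s' : S) : pol s a * Pk s a s' ≠ ∞ :=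
  ne_top_of_le_ne_top one_ne_top <| sum_pol_mul_Pk hpol hPk s ▸
    (Finset.single_le_sum (fun _ _ => zero_le) (Finset.mem_univ s')).trans
      (Finset.single_le_sum (f := fun a => ∑ s', pol s a * Pk s a s') (fun _ _ => zero_le)
        (Finset.mem_univ a))

lemma sum_toReal_pol_mul_Pk (hpol : ∀ s, ∑ a, pol s a = 1) (hPk : ∀ s a, ∑ s', Pk s a s' = 1)
    (s : S) : ∑ a, ∑ s', (pol s a * Pk s a s').toReal = 1 := by
  rw [← toReal_one, ← sum_pol_mul_Pk hpol hPk s, toReal_sum fun a _ => ?_]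
  · exact Finset.sum_congr rfl fun a _ =>
      (toReal_sum fun s' _ => pol_mul_Pk_ne_top hpol hPk s a s').symm
  · exact sum_ne_top.2 fun s' _ => pol_mul_Pk_ne_top hpol hPk s a s'

lemma bellman_apply (Z : S → Measure ℝ) (s : S) {E : Set ℝ} (hE : MeasurableSet E) :
    bellman pol Pk r γ Z s E
      = ∑ a, ∑ s', pol s a * Pk s a s' * Z s' ((fun z => r s a + γ * z) ⁻¹' E) := by
  simp (disch := first | fun_prop | exact hE) only [bellman, Measure.coe_finsetSum,
    Finset.sum_apply, Measure.smul_apply, Measure.map_apply, smul_eq_mul]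

lemma isProbabilityMeasure_bellman (hpol : ∀ s, ∑ a, pol s a = 1)
    (hPk : ∀ s a, ∑ s', Pk s a s' = 1) {Z : S → Measure ℝ} [∀ s, IsProbabilityMeasure (Z s)]
    (s : S) : IsProbabilityMeasure (bellman pol Pk r γ Z s) :=
  ⟨by simp [bellman_apply Z s MeasurableSet.univ, sum_pol_mul_Pk hpol hPk]⟩

lemma bellman_compl_Icc_eq_zero {Z : S → Measure ℝ} {R : ℝ} (hR : ∀ s a, |r s a| + |γ| * R ≤ R)
    (hZ : ∀ s, Z s (Set.Icc (-R) R)ᶜ = 0) (s : S) :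
    bellman pol Pk r γ Z s (Set.Icc (-R) R)ᶜ = 0 := by
  rw [bellman_apply Z s measurableSet_Icc.compl]
  refine Finset.sum_eq_zero fun a _ => Finset.sum_eq_zero fun s' _ => ?_
  suffices (fun z => r s a + γ * z) ⁻¹' (Set.Icc (-R) R)ᶜ ⊆ (Set.Icc (-R) R)ᶜ by
    rw [measure_mono_null this (hZ s'), mul_zero]
  refine Set.compl_subset_compl.2 fun z hz => abs_le.1 ?_
  calc |r s a + γ * z| ≤ |r s a| + |γ| * |z| := by rw [← abs_mul]; exact abs_add_le _ _
    _ ≤ |r s a| + |γ| * R := by gcongr; exact abs_le.2 hz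
    _ ≤ R := hR s a

lemma charFun_bellman (hpol : ∀ s, ∑ a, pol s a = 1) (hPk : ∀ s a, ∑ s', Pk s a s' = 1)
    (Z : S → Measure ℝ) [∀ s, IsFiniteMeasure (Z s)] (s : S) (u : ℝ) :
    charFun (bellman pol Pk r γ Z s) u
      = ∑ a, ∑ s', (pol s a * Pk s a s').toReal *
          (charFun (Z s') (γ * u) * cexp ((u * r s a : ℝ) * I)) := by
  have hint : ∀ a s', Integrable (fun x : ℝ => cexp (u * x * I))
      ((pol s a * Pk s a s') • (Z s').map (fun z => r s a + γ * z)) := fun a s' =>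
    ((integrable_const (1 : ℂ)).mono (by fun_prop) (ae_of_all _ fun x => by
      simpa using (norm_exp_ofReal_mul_I (u * x)).le)).smul_measure
        (pol_mul_Pk_ne_top hpol hPk s a s')
  rw [charFun_apply_real, bellman, integral_finsetSum_measure fun a _ =>
    integrable_finsetSum_measure.2 fun s' _ => hint a s']
  refine Finset.sum_congr rfl fun a _ => ?_
  rw [integral_finsetSum_measure fun s' _ => hint a s']
  refine Finset.sum_congr rfl fun s' _ => ?_
  have hmap : (Z s').map (fun z => r s a + γ * z) = ((Z s').map (γ * ·)).map (r s a + ·) :=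
    (Measure.map_map (by fun_prop) (by fun_prop)).symm
  rw [integral_smul_measure, ← charFun_apply_real, hmap, charFun_map_const_add, charFun_map_mul]
  simp [Complex.real_smul, RCLike.inner_apply]

lemma isProbabilityMeasure_iterate_bellman (hpol : ∀ s, ∑ a, pol s a = 1)
    (hPk : ∀ s a, ∑ s', Pk s a s' = 1) {Z : S → Measure ℝ} [∀ s, IsProbabilityMeasure (Z s)]
    (n : ℕ) (s : S) : IsProbabilityMeasure ((bellman pol Pk r γ)^[n] Z s) := by
  induction n generalizing s with
  | zero => rw [Function.iterate_zero_apply]; infer_instance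
  | succ n ih => rw [Function.iterate_succ_apply']; exact isProbabilityMeasure_bellman hpol hPk s

lemma iterate_bellman_compl_Icc_eq_zero {R : ℝ} (hR0 : 0 ≤ R) (hR : ∀ s a, |r s a| + |γ| * R ≤ R)
    (n : ℕ) (s : S) :
    ((bellman pol Pk r γ)^[n] (fun _ => Measure.dirac 0) s) (Set.Icc (-R) R)ᶜ = 0 := by
  induction n generalizing s with
  | zero => simp [hR0]
  | succ n ih => rw [Function.iterate_succ_apply']; exact bellman_compl_Icc_eq_zero hR ih s

end Bellman

section CharFunDist

variable {S : Type*} [Fintype S]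

/-- The gap `D(u)` of the proof sketch, the Fourier-side counterpart of `WpBar`. -/
noncomputable def charFunDist (Z Z' : S → Measure ℝ) (u : ℝ) : ℝ≥0 :=
  Finset.univ.sup fun s => ‖charFun (Z s) u - charFun (Z' s) u‖₊

lemma norm_charFun_sub_le_charFunDist (Z Z' : S → Measure ℝ) (s : S) (u : ℝ) :
    ‖charFun (Z s) u - charFun (Z' s) u‖ ≤ charFunDist Z Z' u :=
  NNReal.coe_le_coe.2 <| Finset.le_sup (f := fun s => ‖charFun (Z s) u - charFun (Z' s) u‖₊)
    (Finset.mem_univ s)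

lemma continuous_charFunDist (Z Z' : S → Measure ℝ) [∀ s, IsFiniteMeasure (Z s)]
    [∀ s, IsFiniteMeasure (Z' s)] : Continuous (charFunDist Z Z') :=
  Continuous.finset_sup_apply fun _ _ => by fun_prop

lemma charFunDist_zero (Z Z' : S → Measure ℝ) [∀ s, IsProbabilityMeasure (Z s)]
    [∀ s, IsProbabilityMeasure (Z' s)] : charFunDist Z Z' 0 = 0 := by
  simp [charFunDist, charFun_zero]

end CharFunDist

section Contraction

variable {S A : Type*} [Fintype S] [Fintype A] {pol : S → A → ℝ≥0∞} {Pk : S → A → S → ℝ≥0∞}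
  {r : S → A → ℝ} {γ : ℝ}

lemma norm_charFun_bellman_sub_le (hpol : ∀ s, ∑ a, pol s a = 1)
    (hPk : ∀ s a, ∑ s', Pk s a s' = 1) (Z Z' : S → Measure ℝ) [∀ s, IsFiniteMeasure (Z s)]
    [∀ s, IsFiniteMeasure (Z' s)] (s : S) (u : ℝ) :
    ‖charFun (bellman pol Pk r γ Z s) u - charFun (bellman pol Pk r γ Z' s) u‖
      ≤ charFunDist Z Z' (γ * u) := by
  rw [charFun_bellman hpol hPk, charFun_bellman hpol hPk, ← Finset.sum_sub_distrib]
  simp_rw [← Finset.sum_sub_distrib, ← mul_sub, ← sub_mul]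
  calc _ ≤ ∑ a, ∑ s', (pol s a * Pk s a s').toReal * (charFunDist Z Z' (γ * u) : ℝ) := by
        refine (norm_sum_le _ _).trans (Finset.sum_le_sum fun a _ =>
          (norm_sum_le _ _).trans (Finset.sum_le_sum fun s' _ => ?_))
        rw [norm_mul, norm_mul, norm_exp_ofReal_mul_I, mul_one, Complex.norm_real,
          Real.norm_of_nonneg toReal_nonneg]
        gcongr
        exact norm_charFun_sub_le_charFunDist Z Z' s' (γ * u)
    _ = charFunDist Z Z' (γ * u) := by
        simp_rw [← Finset.sum_mul, sum_toReal_pol_mul_Pk hpol hPk, one_mul]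

lemma charFunDist_iterate_bellman_le (hpol : ∀ s, ∑ a, pol s a = 1)
    (hPk : ∀ s a, ∑ s', Pk s a s' = 1) (Z Z' : S → Measure ℝ) [∀ s, IsProbabilityMeasure (Z s)]
    [∀ s, IsProbabilityMeasure (Z' s)] (n : ℕ) (u : ℝ) :
    charFunDist ((bellman pol Pk r γ)^[n] Z) ((bellman pol Pk r γ)^[n] Z') u
      ≤ charFunDist Z Z' (γ ^ n * u) := by
  induction n generalizing u with
  | zero => rw [Function.iterate_zero_apply, Function.iterate_zero_apply, pow_zero, one_mul]
  | succ n ih =>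
    have := isProbabilityMeasure_iterate_bellman (r := r) (γ := γ) hpol hPk (Z := Z) n
    have := isProbabilityMeasure_iterate_bellman (r := r) (γ := γ) hpol hPk (Z := Z') n
    refine Finset.sup_le fun s _ => ?_
    rw [← NNReal.coe_le_coe, coe_nnnorm, Function.iterate_succ_apply',
      Function.iterate_succ_apply', pow_succ, mul_assoc]
    exact (norm_charFun_bellman_sub_le hpol hPk _ _ s u).trans (ih (γ * u))

lemma tendsto_charFun_iterate_bellman_sub (hpol : ∀ s, ∑ a, pol s a = 1)
    (hPk : ∀ s a, ∑ s', Pk s a s' = 1) (hγ : |γ| < 1) (Z Z' : S → Measure ℝ)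
    [∀ s, IsProbabilityMeasure (Z s)] [∀ s, IsProbabilityMeasure (Z' s)] (s : S) (u : ℝ) :
    Tendsto (fun n => charFun ((bellman pol Pk r γ)^[n] Z s) u
      - charFun ((bellman pol Pk r γ)^[n] Z' s) u) atTop (𝓝 0) := by
  have hlim : Tendsto (fun n => (charFunDist Z Z' (γ ^ n * u) : ℝ)) atTop (𝓝 0) := by
    rw [← NNReal.coe_zero, ← charFunDist_zero Z Z']
    refine (NNReal.continuous_coe.comp (continuous_charFunDist Z Z')).continuousAt.tendsto.comp ?_
    simpa using (tendsto_pow_atTop_nhds_zero_of_abs_lt_one hγ).mul_const u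
  refine squeeze_zero_norm (fun n => ?_) hlim
  have := isProbabilityMeasure_iterate_bellman (r := r) (γ := γ) hpol hPk (Z := Z) n
  have := isProbabilityMeasure_iterate_bellman (r := r) (γ := γ) hpol hPk (Z := Z') n
  exact (norm_charFun_sub_le_charFunDist _ _ s u).trans
    (NNReal.coe_le_coe.2 (charFunDist_iterate_bellman_le hpol hPk Z Z' n u))

end Contraction

section FixedPoint

variable {S A : Type*} [Fintype S] [Fintype A] {pol : S → A → ℝ≥0∞} {Pk : S → A → S → ℝ≥0∞}
  {r : S → A → ℝ} {γ : ℝ}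

lemma continuous_charFun_bellman (hpol : ∀ s, ∑ a, pol s a = 1)
    (hPk : ∀ s a, ∑ s', Pk s a s' = 1) (s : S) (u : ℝ) :
    Continuous fun ν : S → ProbabilityMeasure ℝ =>
      charFun (bellman pol Pk r γ (fun s => ν s) s) u := by
  simp_rw [charFun_bellman hpol hPk]
  exact continuous_finsetSum _ fun a _ => continuous_finsetSum _ fun s' _ =>
    continuous_const.mul
      (((ProbabilityMeasure.continuous_charFun_apply _).comp (continuous_apply s')).mul
        continuous_const)

theorem bellman_fixedPoint_unique (hpol : ∀ s, ∑ a, pol s a = 1)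
    (hPk : ∀ s a, ∑ s', Pk s a s' = 1) (hγ : |γ| < 1) {Z Z' : S → Measure ℝ}
    [∀ s, IsProbabilityMeasure (Z s)] [∀ s, IsProbabilityMeasure (Z' s)]
    (hZ : bellman pol Pk r γ Z = Z) (hZ' : bellman pol Pk r γ Z' = Z') : Z = Z' := by
  funext s
  refine Measure.ext_of_charFun (funext fun u => sub_eq_zero.1 ?_)
  refine tendsto_nhds_unique (tendsto_const_nhds.congr fun n => ?_)
    (tendsto_charFun_iterate_bellman_sub (r := r) hpol hPk hγ Z Z' s u)
  rw [Function.iterate_fixed hZ, Function.iterate_fixed hZ']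

theorem bellman_eq_self_of_mapClusterPt_iterate (hpol : ∀ s, ∑ a, pol s a = 1)
    (hPk : ∀ s a, ∑ s', Pk s a s' = 1) (hγ : |γ| < 1) {Z₀ : S → Measure ℝ}
    [∀ s, IsProbabilityMeasure (Z₀ s)] {ν : ℕ → S → ProbabilityMeasure ℝ}
    (hν : ∀ n, (fun s => (ν n s : Measure ℝ)) = (bellman pol Pk r γ)^[n] Z₀)
    {μ : S → ProbabilityMeasure ℝ} (hμ : MapClusterPt μ atTop ν) :
    bellman pol Pk r γ (fun s => μ s) = fun s => (μ s : Measure ℝ) := by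
  funext s
  have :=
    isProbabilityMeasure_bellman (r := r) (γ := γ) hpol hPk (Z := fun s => (μ s : Measure ℝ)) s
  have (s : S) := isProbabilityMeasure_bellman (r := r) (γ := γ) hpol hPk (Z := Z₀) s
  refine Measure.ext_of_charFun (funext fun u => sub_eq_zero.1 ?_)
  have hΨ : Continuous fun ν : S → ProbabilityMeasure ℝ =>
      charFun (bellman pol Pk r γ (fun s => ν s) s) u - charFun (ν s : Measure ℝ) u :=
    (continuous_charFun_bellman hpol hPk s u).sub
      ((ProbabilityMeasure.continuous_charFun_apply u).comp (continuous_apply s))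
  refine (hμ.tendsto_comp (hΨ.tendsto μ)).eq_of_tendsto ?_
  refine (tendsto_charFun_iterate_bellman_sub (r := r) hpol hPk hγ (bellman pol Pk r γ Z₀) Z₀ s
    u).congr fun n => ?_
  rw [← Function.iterate_succ_apply, Function.iterate_succ_apply', Function.comp_apply, hν n,
    ← congr_fun (hν n) s]

theorem exists_bellman_fixedPoint (hpol : ∀ s, ∑ a, pol s a = 1)
    (hPk : ∀ s a, ∑ s', Pk s a s' = 1) (hγ : |γ| < 1) :
    ∃ Z : S → Measure ℝ, (∀ s, IsProbabilityMeasure (Z s)) ∧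
      (∃ R, ∀ s, Z s (Set.Icc (-R) R)ᶜ = 0) ∧ bellman pol Pk r γ Z = Z := by
  obtain ⟨R, hR0, hR⟩ := exists_nonneg_forall_abs_add_mul_le (fun p : S × A => r p.1 p.2) hγ
  let ν : ℕ → S → ProbabilityMeasure ℝ := fun n s =>
    ⟨(bellman pol Pk r γ)^[n] (fun _ => Measure.dirac 0) s,
      isProbabilityMeasure_iterate_bellman hpol hPk n s⟩
  have hνR (n : ℕ) (s : S) : ν n s (Set.Icc (-R) R)ᶜ = 0 :=
    (ProbabilityMeasure.null_iff_toMeasure_null _ _).2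
      (iterate_bellman_compl_Icc_eq_zero hR0 (fun s a => hR (s, a)) n s)
  obtain ⟨μ, hμR, hμ⟩ := (isCompact_univ_pi fun _ : S =>
      isCompact_setOf_probabilityMeasure_compl_eq_zero isCompact_Icc).exists_mapClusterPt
    (f := atTop) (u := ν) (tendsto_principal.2 (.of_forall fun n s _ => hνR n s))
  exact ⟨fun s => (μ s : Measure ℝ), fun s => inferInstance,
    ⟨R, fun s => (ProbabilityMeasure.null_iff_toMeasure_null _ _).1 (hμR s trivial)⟩,
    bellman_eq_self_of_mapClusterPt_iterate hpol hPk hγ (fun _ => rfl) hμ⟩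

end FixedPoint

theorem bellman_unique_fixed_point_general {S A : Type*} [Fintype S] [Fintype A]
    (pol : S → A → ℝ≥0∞) (hpol : ∀ s, ∑ a : A, pol s a = 1)
    (Pk : S → A → S → ℝ≥0∞) (hPk : ∀ s a, ∑ s' : S, Pk s a s' = 1)
    (r : S → A → ℝ) (γ : ℝ) (hγ0 : 0 ≤ γ) (hγ1 : γ < 1)
    (p : ℝ) (hp : 1 ≤ p) :
    ∃! pπ : S → MeasureTheory.Measure ℝ,
      (∀ s, IsProbabilityMeasure (pπ s)) ∧
      (∀ s, ∫⁻ x, (‖x‖₊ : ℝ≥0∞) ^ p ∂(pπ s) < ∞) ∧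
      bellman pol Pk r γ pπ = pπ := by
  have hγ : |γ| < 1 := abs_lt.2 ⟨by linarith, hγ1⟩
  obtain ⟨Z, hZprob, ⟨R, hZR⟩, hZ⟩ := exists_bellman_fixedPoint (r := r) hpol hPk hγ
  refine ⟨Z, ⟨hZprob, fun s =>
    lintegral_nnnorm_rpow_lt_top_of_measure_compl_Icc_eq_zero (by linarith) (hZR s), hZ⟩, ?_⟩
  rintro Z' ⟨hZ'prob, -, hZ'⟩
  exact bellman_fixedPoint_unique hpol hPk hγ hZ' hZ

/-- The distributional Bellman operator has a unique fixed point among families of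
probability measures on ℝ with finite p-th moments. -/
theorem bellman_unique_fixed_point {S A : Type*} [Fintype S] [Fintype A]
    [Nonempty S] [Nonempty A]
    (pol : S → A → ℝ≥0∞) (hpol : ∀ s, ∑ a : A, pol s a = 1)
    (Pk : S → A → S → ℝ≥0∞) (hPk : ∀ s a, ∑ s' : S, Pk s a s' = 1)
    (r : S → A → ℝ) (γ : ℝ) (hγ0 : 0 ≤ γ) (hγ1 : γ < 1)
    (p : ℝ) (hp : 1 ≤ p) :
    ∃! pπ : S → MeasureTheory.Measure ℝ,
      (∀ s, IsProbabilityMeasure (pπ s)) ∧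
      (∀ s, ∫⁻ x, (‖x‖₊ : ℝ≥0∞) ^ p ∂(pπ s) < ∞) ∧
      bellman pol Pk r γ pπ = pπ :=
  bellman_unique_fixed_point_general pol hpol Pk hPk r γ hγ0 hγ1 p hp
end
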